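/- Let f : U → ℝ be continuous on a connected open U ⊆ ℝᴺ, and suppose there are finitely many linear functions ℓ₁,…,ℓ_m : ℝᴺ → ℝ with integer coefficients such that for every κ ∈ U, f(κ) belongs to the additive subgroup of ℝ generated by ℓ₁(κ),…,ℓ_m(κ). Then on a nonempty open subset of U, f coincides with a fixed integer linear combination of the ℓⱼ, i.e. f(κ) = Σⱼ nⱼ ℓⱼ(κ) for fixed integers nⱼ. -/
import Mathlib


open Filter

/-- If f is continuous on a connected open U ⊆ ℝᴺ and for every κ ∈ U, f(κ) lies in the
additive subgroup of ℝ generated by the values ℓ₁(κ),…,ℓ_m(κ) of finitely many linear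
functions with integer coefficients, then on some nonempty open subset of U, f equals a
fixed integer linear combination of the ℓⱼ. -/
theorem stmt_2 (N m : ℕ) (U : Set (Fin N → ℝ))
    (hUopen : IsOpen U) (hUconn : IsConnected U)
    (f : (Fin N → ℝ) → ℝ) (hf : ContinuousOn f U)
    (a : Fin m → Fin N → ℤ)
    (L : Fin m → (Fin N → ℝ) → ℝ)
    (hL : ∀ j κ, L j κ = ∑ i, (a j i : ℝ) * κ i)
    (hmem : ∀ κ ∈ U, ∃ c : Fin m → ℤ, f κ = ∑ j, (c j : ℝ) * L j κ) :
    ∃ V : Set (Fin N → ℝ), V ⊆ U ∧ IsOpen V ∧ V.Nonempty ∧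
      ∃ c : Fin m → ℤ, ∀ κ ∈ V, f κ = ∑ j, (c j : ℝ) * L j κ := by
  -- Work in the subtype U, which is a Baire space (open subset of ℝᴺ).
  haveI : LocallyCompactSpace U := hUopen.locallyCompactSpace
  haveI : Encodable (Fin m → ℤ) := Encodable.ofCountable _
  -- each L j is continuous
  have hLcont : ∀ j, Continuous (L j) := by
    intro j
    have : (L j) = fun κ => ∑ i, (a j i : ℝ) * κ i := funext (hL j)
    rw [this]
    exact continuous_finset_sum _ fun i _ =>
      continuous_const.mul (continuous_apply i)
  set F : (Fin m → ℤ) → Set U :=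
    fun c => {x : U | f x.1 = ∑ j, (c j : ℝ) * L j x.1} with hF
  have hclosed : ∀ c, IsClosed (F c) := by
    intro c
    apply isClosed_eq
    · exact hf.restrict
    · exact continuous_finset_sum _ fun j _ =>
        continuous_const.mul ((hLcont j).comp continuous_subtype_val)
  have hcover : (⋃ c, F c) = Set.univ := by
    ext x
    simp only [Set.mem_iUnion, Set.mem_univ, iff_true]
    exact hmem x.1 x.2
  haveI : Nonempty U := hUconn.nonempty.to_subtype
  obtain ⟨c, hc⟩ := nonempty_interior_of_iUnion_of_closed hclosed hcover
  refine ⟨Subtype.val '' interior (F c), ?_, ?_, ?_, c, ?_⟩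
  · rintro x ⟨y, -, rfl⟩; exact y.2
  · exact hUopen.isOpenMap_subtype_val _ isOpen_interior
  · exact hc.image _
  · rintro κ ⟨y, hy, rfl⟩
    exact (interior_subset hy : y ∈ F c)
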